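/- The optimal full-merge utility and the optimal partial pair-encoding utility are within a constant factor: for every string s and every k, OPT(s,k) ≤ 3 · OPT^m(s,k). -/

import Mathlib

/-!
Undoing a partial step `s = expand a b c u` turns a `k`-packing of `u` into a `(k+1)`-packing
of `s` with one more class, the blocks `ab` that replaced `c`; hence `OPT(s,k) ≤ P_k(s)`.
Conversely, take a `(k+1)`-packing of `s` and fully merge the pair of one of its classes into a
fresh symbol `c`. That class disappears; each of the `g` new symbols destroys at most three
positions of the other classes (the one before its block and the two inside it), and the
remaining positions form a `k`-packing of the merged string. Since the merge gains `g`,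
induction on `k` gives `P_k(s) ≤ 3 · OPT^m(s,k)`.
-/

variable {α : Type*} [DecidableEq α]

/-- Full greedy left-to-right replacement of the pair `ab` by `c`. -/
def replace (a b c : α) : List α → List α
  | [] => []
  | [x] => [x]
  | x :: y :: rest =>
    if x = a ∧ y = b then c :: replace a b c rest
    else x :: replace a b c (y :: rest)

/-- Replacement of every occurrence of the symbol `c` by the pair `ab`. -/
def expand (a b c : α) : List α → List α
  | [] => []
  | x :: rest => if x = c then a :: b :: expand a b c rest else x :: expand a b c rest

/-- `t` is obtained from `s` by one partial replacement rule (replacing some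
non-overlapping occurrences of a pair `ab` by a symbol `c`, invertibly). -/
def PartialStep (s t : List α) : Prop := ∃ a b c : α, expand a b c t = s

/-- `t` is obtained from `s` by one full merge of a pair `ab` into a fresh symbol `c`. -/
def FullStep (s t : List α) : Prop := ∃ a b c : α, c ∉ s ∧ t = replace a b c s

/-- A greedy (BPE) step: a full merge minimizing the resulting length. -/
def GreedyStep (s t : List α) : Prop :=
  FullStep s t ∧ ∀ u : List α, FullStep s u → t.length ≤ u.length

/-- `t` is obtained from `s` by a partial merge sequence of length `k`. -/
def PartialReach : ℕ → List α → List α → Prop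
  | 0, s, t => t = s
  | k+1, s, t => ∃ u, PartialStep s u ∧ PartialReach k u t

/-- `t` is obtained from `s` by a full merge sequence of length `k`. -/
def FullReach : ℕ → List α → List α → Prop
  | 0, s, t => t = s
  | k+1, s, t => ∃ u, FullStep s u ∧ FullReach k u t

/-- `t` is obtained from `s` by a run of BPE with `k` greedy merge rounds. -/
def GreedyReach : ℕ → List α → List α → Prop
  | 0, s, t => t = s
  | k+1, s, t => ∃ u, GreedyStep s u ∧ GreedyReach k u t

/-- Optimal utility of partial merge sequences of length `k` (the OPE optimum). -/
noncomputable def OPT (s : List α) (k : ℕ) : ℕ :=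
  sSup {u : ℕ | ∃ t : List α, PartialReach k s t ∧ u = s.length - t.length}

/-- Optimal utility of full merge sequences of length `k` (the OMS optimum). -/
noncomputable def OPTm (s : List α) (k : ℕ) : ℕ :=
  sSup {u : ℕ | ∃ t : List α, FullReach k s t ∧ u = s.length - t.length}

/-- A pair packing: non-overlapping indices at which a common pair occurs in `s`
(0-based indices). -/
def IsPairPacking (s : List α) (P : Finset ℕ) : Prop :=
  (∀ i ∈ P, i + 1 < s.length) ∧
  (∀ i ∈ P, ∀ j ∈ P, i ≠ j → 2 ≤ Nat.dist i j) ∧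
  ∃ a b : α, ∀ i ∈ P, s[i]? = some a ∧ s[i+1]? = some b

/-- A `k`-packing: a disjoint union of `k` pair packings. -/
def IsKPacking (s : List α) (k : ℕ) (P : Fin k → Finset ℕ) : Prop :=
  (∀ i, IsPairPacking s (P i)) ∧ ∀ i j, i ≠ j → Disjoint (P i) (P j)

/-- `Pk s k`: maximum size of a `k`-packing of `s`. -/
noncomputable def Pk (s : List α) (k : ℕ) : ℕ :=
  sSup {n : ℕ | ∃ P : Fin k → Finset ℕ, IsKPacking s k P ∧ n = ∑ i, (P i).card}

/-- Number of (possibly overlapping) occurrences of the pair `ab` in `s`. -/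
def freq (s : List α) (a b : α) : ℕ :=
  ((Finset.range s.length).filter (fun i => s[i]? = some a ∧ s[i+1]? = some b)).card

/-- `Fk s k`: total number of occurrences of the `k` most frequent pairs in `s`. -/
noncomputable def Fk (s : List α) (k : ℕ) : ℕ :=
  sSup {n : ℕ | ∃ Q : Finset (α × α), Q.card ≤ k ∧ n = ∑ p ∈ Q, freq s p.1 p.2}

@[simp] lemma expand_nil (a b c : α) : expand a b c [] = [] := rfl

lemma expand_cons (a b c x : α) (l : List α) :
    expand a b c (x :: l) = if x = c then a :: b :: expand a b c l else x :: expand a b c l :=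
  rfl

lemma length_expand (a b c : α) (l : List α) :
    (expand a b c l).length = l.length + l.count c := by
  induction l with
  | nil => rfl
  | cons x l ih =>
    by_cases hx : x = c <;> simp [expand_cons, hx, ih] <;> omega

lemma expand_replace {a b c : α} {s : List α} (hc : c ∉ s) :
    expand a b c (replace a b c s) = s := by
  induction s using replace.induct a b with
  | case1 => rfl
  | case2 x =>
    have hx : x ≠ c := by rintro rfl; simp at hc
    simp [replace, expand_cons, hx]
  | case3 x y rest hxy ih =>
    obtain ⟨rfl, rfl⟩ := hxy
    simp_all [replace, expand_cons]
  | case4 x y rest hxy ih =>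
    have hx : x ≠ c := by rintro rfl; simp at hc
    rw [replace, if_neg hxy, expand_cons, if_neg hx, ih (fun h => hc (by simp [h]))]

lemma replace_of_not_mem {a b c : α} {s : List α} (ha : a ∉ s) : replace a b c s = s := by
  induction s using replace.induct a b with
  | case1 => rfl
  | case2 x => rfl
  | case3 x y rest hxy ih => simp_all
  | case4 x y rest hxy ih => simp_all [replace]

lemma length_replace_le {a b c : α} {s : List α} (hc : c ∉ s) :
    (replace a b c s).length ≤ s.length := by
  conv_rhs => rw [← expand_replace (a := a) (b := b) hc]
  rw [length_expand]
  omega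

lemma getElem?_zero_replace (a b c : α) (l : List α) :
    (replace a b c l)[0]? = l[0]? ∨ ((replace a b c l)[0]? = some c ∧ ∃ r, l = a :: b :: r) := by
  match l with
  | [] | [_] => simp [replace]
  | x :: y :: r =>
    by_cases h : x = a ∧ y = b
    · obtain ⟨rfl, rfl⟩ := h
      simp [replace]
    · simp [replace, h]

lemma not_pair_replace {a b c : α} {s : List α} (hc : c ∉ s) (j : ℕ) :
    ¬((replace a b c s)[j]? = some a ∧ (replace a b c s)[j+1]? = some b) := by
  induction s using replace.induct a b generalizing j with
  | case1 => simp [replace]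
  | case2 x => simp [replace]
  | case3 x y rest hxy ih =>
    obtain ⟨rfl, rfl⟩ := hxy
    cases j with
    | zero => simp_all [replace]
    | succ j => simpa [replace] using ih (fun h => hc (by simp [h])) j
  | case4 x y rest hxy ih =>
    rw [replace, if_neg hxy]
    cases j with
    | zero =>
      rintro ⟨hx, h⟩
      obtain rfl : x = a := by simpa using hx
      rcases getElem?_zero_replace x b c (y :: rest) with h0 | ⟨h0, r, hr⟩
      · simp_all
      · cases hr
        simp_all
    | succ j => simpa using ih (fun h => hc (by simp [h])) j

/-- Position in `expand a b c u` at which the image of `u[j]` starts. -/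
def blockStart (c : α) (u : List α) (j : ℕ) : ℕ := j + (u.take j).count c

@[simp] lemma blockStart_zero (c : α) (u : List α) : blockStart c u 0 = 0 := by
  simp [blockStart]

lemma blockStart_cons_succ (c x : α) (u : List α) (j : ℕ) :
    blockStart c (x :: u) (j + 1) = blockStart c u j + if x = c then 2 else 1 := by
  by_cases hx : x = c <;> simp [blockStart, hx] <;> omega

lemma blockStart_succ (c : α) (u : List α) (j : ℕ) :
    blockStart c u (j + 1) = blockStart c u j + if u[j]? = some c then 2 else 1 := by
  simp only [blockStart, List.take_add_one, List.count_append]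
  rcases h : u[j]? with - | x
  · simp
    omega
  · by_cases hx : x = c <;> simp [hx] <;> omega

lemma blockStart_strictMono (c : α) (u : List α) : StrictMono (blockStart c u) :=
  strictMono_nat_of_lt_succ fun j => by rw [blockStart_succ]; split <;> omega

lemma blockStart_length (a b c : α) (u : List α) :
    blockStart c u u.length = (expand a b c u).length := by
  simp [blockStart, length_expand]

lemma ite_map_eq_self {c d : α} {o : Option α} (h : o ≠ some c) :
    o.map (fun x => if x = c then d else x) = o := by
  cases o <;> simp_all

lemma getElem?_expand_blockStart (a b c : α) (u : List α) (j : ℕ) :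
    (expand a b c u)[blockStart c u j]? = u[j]?.map (fun x => if x = c then a else x) := by
  induction u generalizing j with
  | nil => simp
  | cons x u ih =>
    cases j with
    | zero => by_cases hx : x = c <;> simp [expand_cons, hx]
    | succ j => by_cases hx : x = c <;> simp [expand_cons, blockStart_cons_succ, hx, ih]

lemma getElem?_expand_blockStart_add_one (a b c : α) {u : List α} {j : ℕ} (h : u[j]? = some c) :
    (expand a b c u)[blockStart c u j + 1]? = some b := by
  induction u generalizing j with
  | nil => simp at h
  | cons x u ih =>
    cases j with
    | zero => simp_all [expand_cons]
    | succ j =>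
      have := ih (by simpa using h)
      by_cases hx : x = c <;> simp [expand_cons, blockStart_cons_succ, hx, this]

lemma exists_blockStart_eq (a b c : α) (u : List α) {p : ℕ} (hp : p < (expand a b c u).length) :
    ∃ j, p = blockStart c u j ∨ (u[j]? = some c ∧ p = blockStart c u j + 1) := by
  induction u generalizing p with
  | nil => simp at hp
  | cons x u ih =>
    by_cases hx : x = c
    · rw [expand_cons, if_pos hx] at hp
      match p, hp with
      | 0, _ => exact ⟨0, by simp⟩
      | 1, _ => exact ⟨0, by simp [hx]⟩
      | q + 2, hq =>
        obtain ⟨j, hj⟩ := ih (p := q) (by simpa using hq)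
        exact ⟨j + 1, by simpa [blockStart_cons_succ, hx] using hj⟩
    · rw [expand_cons, if_neg hx] at hp
      match p, hp with
      | 0, _ => exact ⟨0, by simp⟩
      | q + 1, hq =>
        obtain ⟨j, hj⟩ := ih (p := q) (by simpa using hq)
        exact ⟨j + 1, by simpa [blockStart_cons_succ, hx] using hj⟩

section Packing

omit [DecidableEq α]

lemma isPairPacking_iff {s : List α} {P : Finset ℕ} :
    IsPairPacking s P ↔
      (∀ i ∈ P, i + 1 ∉ P) ∧ ∃ a b : α, ∀ i ∈ P, s[i]? = some a ∧ s[i+1]? = some b := by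
  constructor
  · rintro ⟨-, hsep, hpair⟩
    refine ⟨fun i hi hi' => ?_, hpair⟩
    have := hsep i hi (i + 1) hi' (by omega)
    simp [Nat.dist] at this
  · rintro ⟨hsep, a, b, hpair⟩
    refine ⟨fun i hi => (List.getElem?_eq_some_iff.mp (hpair i hi).2).1,
      fun i hi j hj hij => ?_, a, b, hpair⟩
    by_contra hlt
    have : j = i + 1 ∨ i = j + 1 := by simp only [Nat.dist] at hlt; omega
    rcases this with rfl | rfl
    · exact hsep i hi hj
    · exact hsep j hj hi

lemma image_succ_notMem_of_strictMono {P : Finset ℕ} {f : ℕ → ℕ} (hf : StrictMono f)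
    (hP : ∀ i ∈ P, i + 1 ∉ P) : ∀ x ∈ P.image f, x + 1 ∉ P.image f := by
  intro x hx hx'
  obtain ⟨i, hi, rfl⟩ := Finset.mem_image.mp hx
  obtain ⟨j, hj, hji⟩ := Finset.mem_image.mp hx'
  have hij : i < j := hf.lt_iff_lt.mp (by omega)
  have hgap := hf.add_le_nat (j - i) i
  rw [Nat.sub_add_cancel hij.le] at hgap
  obtain rfl : j = i + 1 := by omega
  exact hP i hi hj

lemma IsKPacking.cons {s : List α} {k : ℕ} {C : Finset ℕ} {Q : Fin k → Finset ℕ}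
    (hC : IsPairPacking s C) (hQ : IsKPacking s k Q) (hdisj : ∀ i, Disjoint C (Q i)) :
    IsKPacking s (k + 1) (Fin.cons C Q) := by
  refine ⟨fun i => Fin.cases (by simpa using hC) (fun i => by simpa using hQ.1 i) i,
    fun i j hij => ?_⟩
  cases i using Fin.cases <;> cases j using Fin.cases
  · exact absurd rfl hij
  · simpa using hdisj _
  · simpa using (hdisj _).symm
  · simpa using hQ.2 _ _ (fun h => hij (congrArg Fin.succ h))

lemma IsKPacking.tail {s : List α} {k : ℕ} {P : Fin (k + 1) → Finset ℕ}
    (hP : IsKPacking s (k + 1) P) : IsKPacking s k (fun i => P i.succ) :=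
  ⟨fun i => hP.1 i.succ, fun _ _ hij => hP.2 _ _ (Fin.succ_injective _ |>.ne hij)⟩

lemma IsKPacking.sum_card_le_length {s : List α} {k : ℕ} {P : Fin k → Finset ℕ}
    (hP : IsKPacking s k P) : ∑ i, (P i).card ≤ s.length := by
  rw [← Finset.card_biUnion (fun i _ j _ hij => hP.2 i j hij)]
  refine (Finset.card_le_card fun x hx => ?_).trans (Finset.card_range s.length).le
  obtain ⟨i, -, hxi⟩ := Finset.mem_biUnion.mp hx
  have := (hP.1 i).1 x hxi
  simp only [Finset.mem_range]
  omega

lemma bddAbove_pk (s : List α) (k : ℕ) :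
    BddAbove {n : ℕ | ∃ P : Fin k → Finset ℕ, IsKPacking s k P ∧ n = ∑ i, (P i).card} :=
  ⟨s.length, by rintro n ⟨P, hP, rfl⟩; exact hP.sum_card_le_length⟩

lemma IsKPacking.sum_card_le_pk {s : List α} {k : ℕ} {P : Fin k → Finset ℕ}
    (hP : IsKPacking s k P) : ∑ i, (P i).card ≤ Pk s k :=
  le_csSup (bddAbove_pk s k) ⟨P, hP, rfl⟩

lemma exists_isKPacking_sum_card_eq_pk [Nonempty α] (s : List α) (k : ℕ) :
    ∃ P : Fin k → Finset ℕ, IsKPacking s k P ∧ Pk s k = ∑ i, (P i).card := by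
  obtain ⟨a⟩ := ‹Nonempty α›
  have hempty : IsKPacking s k (fun _ => ∅) :=
    ⟨fun _ => ⟨by simp, by simp, a, a, by simp⟩, fun _ _ _ => by simp⟩
  exact Nat.sSup_mem (s := {n | ∃ P : Fin k → Finset ℕ, IsKPacking s k P ∧ n = ∑ i, (P i).card})
    ⟨0, _, hempty, by simp⟩ (bddAbove_pk s k)

end Packing

def positionsOf (c : α) (u : List α) : Finset ℕ :=
  (Finset.range u.length).filter (fun j => u[j]? = some c)

lemma card_positionsOf (c : α) (u : List α) : (positionsOf c u).card = u.count c := by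
  induction u with
  | nil => simp [positionsOf]
  | cons x u ih =>
    simp only [positionsOf, Finset.card_filter] at ih ⊢
    rw [List.length_cons, Finset.sum_range_succ']
    by_cases hx : x = c <;> simp [hx, ih]

lemma mem_positionsOf {c : α} {u : List α} {j : ℕ} : j ∈ positionsOf c u ↔ u[j]? = some c := by
  simp only [positionsOf, Finset.mem_filter, Finset.mem_range, and_iff_right_iff_imp]
  exact fun h => (List.getElem?_eq_some_iff.mp h).1

def blockEnd (c : α) (u : List α) (j : ℕ) : ℕ :=
  blockStart c u j + if u[j]? = some c then 1 else 0

lemma blockStart_succ_eq_blockEnd_add_one (c : α) (u : List α) (j : ℕ) :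
    blockStart c u (j + 1) = blockEnd c u j + 1 := by
  rw [blockStart_succ, blockEnd]
  split <;> omega

lemma blockEnd_strictMono (c : α) (u : List α) : StrictMono (blockEnd c u) :=
  strictMono_nat_of_lt_succ fun j => by
    have := blockStart_succ_eq_blockEnd_add_one c u j
    simp only [blockEnd] at this ⊢
    omega

lemma getElem?_expand_blockEnd (a b c : α) (u : List α) (j : ℕ) :
    (expand a b c u)[blockEnd c u j]? = u[j]?.map (fun x => if x = c then b else x) := by
  by_cases h : u[j]? = some c
  · simp [blockEnd, h, getElem?_expand_blockStart_add_one a b c h]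
  · rw [blockEnd, if_neg h, add_zero, getElem?_expand_blockStart, ite_map_eq_self h,
      ite_map_eq_self h]

lemma isPairPacking_image_blockStart_positionsOf (a b c : α) (u : List α) :
    IsPairPacking (expand a b c u) ((positionsOf c u).image (blockStart c u)) := by
  have hmono := blockStart_strictMono c u
  refine isPairPacking_iff.mpr ⟨fun x hx hx' => ?_, a, b, fun x hx => ?_⟩
  all_goals obtain ⟨i, hi, rfl⟩ := Finset.mem_image.mp hx
  all_goals have hic := mem_positionsOf.mp hi
  · obtain ⟨j, -, hj⟩ := Finset.mem_image.mp hx'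
    have hstep : blockStart c u (i + 1) = blockStart c u i + 2 := by simp [blockStart_succ, hic]
    have hij : i < j := hmono.lt_iff_lt.mp (by omega)
    have hji : j < i + 1 := hmono.lt_iff_lt.mp (by omega)
    omega
  · simp [getElem?_expand_blockStart, hic, getElem?_expand_blockStart_add_one a b c hic]

lemma IsPairPacking.image_blockEnd {u : List α} {P : Finset ℕ} (hP : IsPairPacking u P)
    (a b c : α) : IsPairPacking (expand a b c u) (P.image (blockEnd c u)) := by
  obtain ⟨hsep, A, B, hpair⟩ := isPairPacking_iff.mp hP
  refine isPairPacking_iff.mpr ⟨image_succ_notMem_of_strictMono (blockEnd_strictMono c u) hsep,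
    if A = c then b else A, if B = c then a else B, fun x hx => ?_⟩
  obtain ⟨j, hj, rfl⟩ := Finset.mem_image.mp hx
  rw [getElem?_expand_blockEnd, ← blockStart_succ_eq_blockEnd_add_one, getElem?_expand_blockStart,
    (hpair j hj).1, (hpair j hj).2]
  simp

/-- A block of `c` has length two, so its start is never the end of a block. -/
lemma disjoint_image_blockStart_positionsOf_image_blockEnd (c : α) (u : List α) (P : Finset ℕ) :
    Disjoint ((positionsOf c u).image (blockStart c u)) (P.image (blockEnd c u)) := by
  rw [Finset.disjoint_left]
  intro x hx hx'
  obtain ⟨i, hi, rfl⟩ := Finset.mem_image.mp hx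
  obtain ⟨j, -, hj⟩ := Finset.mem_image.mp hx'
  have hend : ∀ m, blockStart c u m ≤ blockEnd c u m := fun m => by simp [blockEnd]
  have hij : i ≤ j := by
    by_contra! hji
    have := (blockStart_strictMono c u).monotone (show j + 1 ≤ i by omega)
    rw [blockStart_succ_eq_blockEnd_add_one] at this
    omega
  rcases hij.eq_or_lt with rfl | hij
  · simp [blockEnd, mem_positionsOf.mp hi] at hj
  · have := blockStart_strictMono c u hij
    have := hend j
    omega

lemma pk_expand_succ [Nonempty α] (a b c : α) (u : List α) (k : ℕ) :
    u.count c + Pk u k ≤ Pk (expand a b c u) (k + 1) := by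
  obtain ⟨P, hP, hPk⟩ := exists_isKPacking_sum_card_eq_pk u k
  have hinj := (blockEnd_strictMono c u).injective
  have hQ : IsKPacking (expand a b c u) (k + 1)
      (Fin.cons ((positionsOf c u).image (blockStart c u)) fun i => (P i).image (blockEnd c u)) :=
    .cons (isPairPacking_image_blockStart_positionsOf a b c u)
      ⟨fun i => (hP.1 i).image_blockEnd a b c,
        fun i j hij => (Finset.disjoint_image hinj).mpr (hP.2 i j hij)⟩
      fun i => disjoint_image_blockStart_positionsOf_image_blockEnd c u (P i)
  refine le_of_eq_of_le ?_ hQ.sum_card_le_pk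
  simp [Fin.sum_univ_succ, Finset.card_image_of_injective _ hinj,
    Finset.card_image_of_injective _ (blockStart_strictMono c u).injective, card_positionsOf, hPk]

/-- Indices `j` of `t` such that `t[j] t[j+1]` is, unchanged, the pair at a position of `P` in
`expand a b c t`. -/
def survivors (c : α) (t : List α) (P : Finset ℕ) : Finset ℕ :=
  (Finset.range t.length).filter
    (fun j => blockStart c t j ∈ P ∧ t[j]? ≠ some c ∧ t[j+1]? ≠ some c)

lemma mem_survivors {c : α} {t : List α} {P : Finset ℕ} {j : ℕ} :
    j ∈ survivors c t P ↔
      j < t.length ∧ blockStart c t j ∈ P ∧ t[j]? ≠ some c ∧ t[j+1]? ≠ some c := by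
  simp [survivors]

lemma pair_of_mem_survivors (a b c : α) {t : List α} {P : Finset ℕ} {A B : α}
    (hP : ∀ p ∈ P, (expand a b c t)[p]? = some A ∧ (expand a b c t)[p+1]? = some B)
    {j : ℕ} (hj : j ∈ survivors c t P) : t[j]? = some A ∧ t[j+1]? = some B := by
  obtain ⟨-, hjP, hj0, hj1⟩ := mem_survivors.mp hj
  obtain ⟨hA, hB⟩ := hP _ hjP
  have hstep : blockStart c t (j + 1) = blockStart c t j + 1 := by simp [blockStart_succ, hj0]
  rw [getElem?_expand_blockStart, ite_map_eq_self hj0] at hA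
  rw [← hstep, getElem?_expand_blockStart, ite_map_eq_self hj1] at hB
  exact ⟨hA, hB⟩

lemma IsPairPacking.survivors {a b c : α} {t : List α} {P : Finset ℕ}
    (hP : IsPairPacking (expand a b c t) P) : IsPairPacking t (survivors c t P) := by
  obtain ⟨hsep, A, B, hpair⟩ := isPairPacking_iff.mp hP
  refine isPairPacking_iff.mpr
    ⟨fun j hj hj' => ?_, A, B, fun j hj => pair_of_mem_survivors a b c hpair hj⟩
  obtain ⟨-, hjP, hj0, -⟩ := mem_survivors.mp hj
  obtain ⟨-, hj'P, -, -⟩ := mem_survivors.mp hj'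
  have hstep : blockStart c t (j + 1) = blockStart c t j + 1 := by simp [blockStart_succ, hj0]
  exact hsep _ hjP (hstep ▸ hj'P)

lemma disjoint_survivors {c : α} {t : List α} {P Q : Finset ℕ} (h : Disjoint P Q) :
    Disjoint (survivors c t P) (survivors c t Q) :=
  Finset.disjoint_left.mpr fun _ hP hQ =>
    Finset.disjoint_left.mp h (mem_survivors.mp hP).2.1 (mem_survivors.mp hQ).2.1

def slots (c : α) (t : List α) : Finset ℕ :=
  (positionsOf c t).biUnion
    fun j => {blockStart c t j - 1, blockStart c t j, blockStart c t j + 1}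

lemma card_slots_le (c : α) (t : List α) : (slots c t).card ≤ 3 * t.count c := by
  rw [← card_positionsOf, mul_comm]
  exact Finset.card_biUnion_le_card_mul _ _ _ fun _ _ => Finset.card_le_three

lemma sdiff_image_survivors_subset_slots {a b c : α} {t : List α} {P : Finset ℕ}
    (hP : ∀ p ∈ P, p + 1 < (expand a b c t).length) :
    P \ (survivors c t P).image (blockStart c t) ⊆ slots c t := by
  intro p hp
  obtain ⟨hpP, hpsurv⟩ := Finset.mem_sdiff.mp hp
  have hslot : ∀ j, t[j]? = some c →
      ∀ x ∈ ({blockStart c t j - 1, blockStart c t j, blockStart c t j + 1} : Finset ℕ),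
        x ∈ slots c t :=
    fun j hj x hx => Finset.mem_biUnion.mpr ⟨j, mem_positionsOf.mpr hj, hx⟩
  have hlen := hP p hpP
  obtain ⟨j, rfl | ⟨hjc, rfl⟩⟩ := exists_blockStart_eq a b c t (show p < _ by omega)
  · by_cases hjc : t[j]? = some c
    · exact hslot j hjc _ (by simp)
    have hstep : blockStart c t (j + 1) = blockStart c t j + 1 := by simp [blockStart_succ, hjc]
    by_cases hj1c : t[j+1]? = some c
    · exact hslot (j + 1) hj1c _ (by simp [hstep])
    have hj : j < t.length := by
      rw [← blockStart_length a b c t] at hlen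
      exact (blockStart_strictMono c t).lt_iff_lt.mp (by omega)
    exact absurd (Finset.mem_image_of_mem _ (mem_survivors.mpr ⟨hj, hpP, hjc, hj1c⟩)) hpsurv
  · exact hslot j hjc _ (by simp)

lemma IsKPacking.sum_card_le_three_mul_count_add {a b c : α} {t : List α} {k : ℕ}
    {P : Fin k → Finset ℕ} (hP : IsKPacking (expand a b c t) k P) :
    ∑ i, (P i).card ≤ 3 * t.count c + ∑ i, (survivors c t (P i)).card := by
  set lost := fun i => P i \ (survivors c t (P i)).image (blockStart c t)
  have hlost : ∑ i, (lost i).card ≤ 3 * t.count c := by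
    rw [← Finset.card_biUnion fun i _ j _ hij =>
      (hP.2 i j hij).mono Finset.sdiff_subset Finset.sdiff_subset]
    refine (Finset.card_le_card (Finset.biUnion_subset.mpr fun i _ => ?_)).trans
      (card_slots_le c t)
    exact sdiff_image_survivors_subset_slots (hP.1 i).1
  calc ∑ i, (P i).card ≤ ∑ i, ((lost i).card + (survivors c t (P i)).card) :=
        Finset.sum_le_sum fun i _ =>
          Finset.card_le_card_sdiff_add_card.trans (Nat.add_le_add_left Finset.card_image_le _)
    _ ≤ 3 * t.count c + ∑ i, (survivors c t (P i)).card := by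
        rw [Finset.sum_add_distrib]
        omega

lemma exists_fullStep_sum_card_le [Infinite α] {s : List α} {k : ℕ} {P : Fin (k + 1) → Finset ℕ}
    (hP : IsKPacking s (k + 1) P) :
    ∃ t, FullStep s t ∧ ∑ i, (P i).card ≤ 3 * (s.length - t.length) + Pk t k := by
  obtain ⟨a, b, hab⟩ := (hP.1 0).2.2
  obtain ⟨c, hc⟩ := Infinite.exists_notMem_finset s.toFinset
  rw [List.mem_toFinset] at hc
  refine ⟨replace a b c s, ⟨a, b, c, hc, rfl⟩, ?_⟩
  have hfree := not_pair_replace (a := a) (b := b) hc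
  generalize ht : replace a b c s = t at hfree ⊢
  obtain rfl : expand a b c t = s := ht ▸ expand_replace hc
  have hsurv : IsKPacking t (k + 1) fun i => survivors c t (P i) :=
    ⟨fun i => (hP.1 i).survivors, fun i j hij => disjoint_survivors (hP.2 i j hij)⟩
  have hsurv_zero : survivors c t (P 0) = ∅ :=
    Finset.eq_empty_of_forall_notMem fun j hj => hfree j (pair_of_mem_survivors a b c hab hj)
  have hlen : (expand a b c t).length - t.length = t.count c := by rw [length_expand]; omega
  calc ∑ i, (P i).card ≤ 3 * t.count c + ∑ i, (survivors c t (P i)).card :=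
        hP.sum_card_le_three_mul_count_add
    _ ≤ 3 * ((expand a b c t).length - t.length) + Pk t k := by
        rw [Fin.sum_univ_succ, hsurv_zero, Finset.card_empty, zero_add, hlen]
        exact Nat.add_le_add_left hsurv.tail.sum_card_le_pk _

lemma FullStep.length_le {s t : List α} (h : FullStep s t) : t.length ≤ s.length := by
  obtain ⟨a, b, c, hc, rfl⟩ := h
  exact length_replace_le hc

lemma FullReach.length_le : ∀ {k : ℕ} {s t : List α}, FullReach k s t → t.length ≤ s.length
  | 0, _, _, rfl => le_rfl
  | _ + 1, _, _, ⟨_, hsu, hut⟩ => hut.length_le.trans hsu.length_le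

lemma fullReach_self [Infinite α] (k : ℕ) (s : List α) : FullReach k s s := by
  induction k with
  | zero => rfl
  | succ k ih =>
    obtain ⟨c, hc⟩ := Infinite.exists_notMem_finset s.toFinset
    rw [List.mem_toFinset] at hc
    exact ⟨s, ⟨c, c, c, hc, (replace_of_not_mem hc).symm⟩, ih⟩

lemma bddAbove_optm (s : List α) (k : ℕ) :
    BddAbove {u : ℕ | ∃ t : List α, FullReach k s t ∧ u = s.length - t.length} :=
  ⟨s.length, by rintro _ ⟨t, -, rfl⟩; exact Nat.sub_le _ _⟩

lemma FullStep.sub_length_add_optm_le [Infinite α] {s t : List α} (h : FullStep s t) (k : ℕ) :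
    s.length - t.length + OPTm t k ≤ OPTm s (k + 1) := by
  obtain ⟨w, hw, hopt⟩ := Nat.sSup_mem (s := {u | ∃ w, FullReach k t w ∧ u = t.length - w.length})
    ⟨0, t, fullReach_self k t, by simp⟩ (bddAbove_optm t k)
  have hle : s.length - w.length ≤ OPTm s (k + 1) :=
    le_csSup (bddAbove_optm s (k + 1)) ⟨w, ⟨t, h, hw⟩, rfl⟩
  have := hw.length_le
  have := h.length_le
  rw [OPTm, hopt]
  omega

lemma pk_le_three_mul_optm [Infinite α] (k : ℕ) (s : List α) : Pk s k ≤ 3 * OPTm s k := by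
  induction k generalizing s with
  | zero => exact csSup_le' (by rintro _ ⟨P, -, rfl⟩; simp)
  | succ k ih =>
    refine csSup_le' ?_
    rintro _ ⟨P, hP, rfl⟩
    obtain ⟨t, hst, hP_le⟩ := exists_fullStep_sum_card_le hP
    have := hst.sub_length_add_optm_le k
    have := ih t
    omega

lemma PartialReach.sub_length_le_pk [Nonempty α] :
    ∀ {k : ℕ} {s t : List α}, PartialReach k s t → s.length - t.length ≤ Pk s k
  | 0, _, _, rfl => by simp
  | k + 1, _, t, ⟨u, ⟨a, b, c, hu⟩, hut⟩ => by
    subst hu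
    have := hut.sub_length_le_pk
    have := pk_expand_succ a b c u k
    rw [length_expand]
    omega

/-- the optimal partial pair-encoding utility is within a factor 3
of the optimal full-merge utility: `OPT(s,k) ≤ 3 · OPT^m(s,k)`. -/
theorem stmt17 {α : Type*} [DecidableEq α] [Infinite α] (s : List α) (k : ℕ) :
    OPT s k ≤ 3 * OPTm s k :=
  csSup_le' fun _ ⟨_, hst, hn⟩ => hn ▸ hst.sub_length_le_pk.trans (pk_le_three_mul_optm k s)
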